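/- arXiv:1903.01326 — 6 statements merged into one kernel-verified Lean document; each statement's English description precedes it below -/
import Mathlib

section
/- Let G be a finite simple graph with n vertices and m edges, without isolated vertices, and let κ = η(G) be its nullity. Then E(G) ≥ sqrt( 2m + (n−κ)(n−κ−1)·|Υ_{n−κ}(G)|^{2/(n−κ)} ). -/
open Finset

/-- The adjacency matrix of a simple graph, as a real matrix, is Hermitian. -/
lemma SimpleGraph.adjMatrix_isHermitian {V : Type*} [Fintype V]
    (G : SimpleGraph V) [DecidableRel G.Adj] : (G.adjMatrix ℝ).IsHermitian := by
  unfold Matrix.IsHermitian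
  ext i j
  simp [Matrix.conjTranspose_apply, SimpleGraph.adj_comm]

/-- The energy of a graph: the sum of the absolute values of the eigenvalues of
its adjacency matrix. -/
noncomputable def SimpleGraph.energy {n : ℕ} (G : SimpleGraph (Fin n))
    [DecidableRel G.Adj] : ℝ :=
  ∑ i, |(G.adjMatrix_isHermitian).eigenvalues i|

/-- The nullity of a graph: the multiplicity of `0` as an eigenvalue of its
adjacency matrix. -/
noncomputable def SimpleGraph.nullity {n : ℕ} (G : SimpleGraph (Fin n))
    [DecidableRel G.Adj] : ℕ :=
  (Finset.univ.filter fun i => (G.adjMatrix_isHermitian).eigenvalues i = 0).card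

/-- `Υ_{n-κ}(G)`: the product of the nonzero eigenvalues of `G`, i.e. the
`(n-κ)`-th elementary symmetric function of the eigenvalues when `κ` is the
nullity of `G`. -/
noncomputable def SimpleGraph.prodNonzeroEig {n : ℕ} (G : SimpleGraph (Fin n))
    [DecidableRel G.Adj] : ℝ :=
  ∏ i ∈ Finset.univ.filter
      (fun i => (G.adjMatrix_isHermitian).eigenvalues i ≠ 0),
    (G.adjMatrix_isHermitian).eigenvalues i

/-! Let `λ_1, …, λ_N` be the nonzero eigenvalues, so `N = n - κ`. Expanding the square gives
`E(G)² = ∑ λ_i² + ∑_{i ≠ j} |λ_i| |λ_j|`, and the first sum is `tr A² = 2m`. Each `|λ_i|`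
occurs `2 (N - 1)` times among the `N (N - 1)` off-diagonal products, so by AM-GM their sum is at
least `N (N - 1) (∏ |λ_i|)^(2/N)`. -/

namespace Finset

variable {ι : Type*} [DecidableEq ι]

theorem prod_offDiag_fst {M : Type*} [CommMonoid M] (s : Finset ι) (f : ι → M) :
    ∏ p ∈ s.offDiag, f p.1 = ∏ i ∈ s, f i ^ (#s - 1) := by
  rw [prod_finset_product _ s (fun i => s.erase i) (by simp only [mem_offDiag, mem_erase]; tauto)]
  exact prod_congr rfl fun i hi => by rw [← card_erase_of_mem hi]; exact prod_const (f i)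

theorem prod_offDiag_snd {M : Type*} [CommMonoid M] (s : Finset ι) (f : ι → M) :
    ∏ p ∈ s.offDiag, f p.2 = ∏ i ∈ s, f i ^ (#s - 1) := by
  rw [prod_finset_product_right _ s (fun i => s.erase i)
    (by simp only [mem_offDiag, mem_erase]; tauto)]
  exact prod_congr rfl fun i hi => by rw [← card_erase_of_mem hi]; exact prod_const (f i)

theorem prod_offDiag_mul {M : Type*} [CommMonoid M] (s : Finset ι) (f : ι → M) :
    ∏ p ∈ s.offDiag, f p.1 * f p.2 = (∏ i ∈ s, f i) ^ (2 * (#s - 1)) := by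
  rw [prod_mul_distrib, prod_offDiag_fst, prod_offDiag_snd, prod_pow, ← pow_add, two_mul]

theorem sq_sum_eq_sum_sq_add_sum_offDiag {R : Type*} [CommSemiring R] (s : Finset ι)
    (f : ι → R) :
    (∑ i ∈ s, f i) ^ 2 = ∑ i ∈ s, f i ^ 2 + ∑ p ∈ s.offDiag, f p.1 * f p.2 := by
  rw [sq, sum_mul_sum, ← sum_product', ← diag_union_offDiag,
    sum_union (disjoint_diag_offDiag s), sum_diag]
  simp only [sq]

theorem card_mul_card_sub_one_mul_prod_rpow_le_sum_offDiag (s : Finset ι) {f : ι → ℝ}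
    (hf : ∀ i ∈ s, 0 ≤ f i) :
    (#s : ℝ) * (#s - 1) * (∏ i ∈ s, f i) ^ ((2 : ℝ) / #s) ≤
      ∑ p ∈ s.offDiag, f p.1 * f p.2 := by
  have hprod_nonneg : ∀ p ∈ s.offDiag, 0 ≤ f p.1 * f p.2 := fun p hp => by
    obtain ⟨h1, h2, -⟩ := mem_offDiag.1 hp
    exact mul_nonneg (hf _ h1) (hf _ h2)
  obtain hs | hs := le_or_gt #s 1
  · have : (#s : ℝ) * (#s - 1) = 0 := by
      interval_cases h : #s <;> simp
    rw [this, zero_mul]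
    exact sum_nonneg hprod_nonneg
  have hcard : (#s.offDiag : ℝ) = #s * (#s - 1) := by
    rw [offDiag_card, Nat.cast_sub (Nat.le_mul_self _)]
    push_cast
    ring
  have hs' : (1 : ℝ) < #s := by exact_mod_cast hs
  have hcard_pos : (0 : ℝ) < #s * (#s - 1) := by nlinarith
  have amgm := Real.geom_mean_le_arith_mean s.offDiag (fun _ => 1) (fun p => f p.1 * f p.2)
    (fun _ _ => zero_le_one) (by rwa [sum_const, nsmul_eq_mul, mul_one, hcard]) hprod_nonneg
  simp only [Real.rpow_one, one_mul, sum_const, nsmul_eq_mul, mul_one, hcard,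
    prod_offDiag_mul] at amgm
  have hP : 0 ≤ ∏ i ∈ s, f i := prod_nonneg hf
  have hexp : ((2 * (#s - 1) : ℕ) : ℝ) * (#s * (#s - 1) : ℝ)⁻¹ = 2 / #s := by
    have : (#s : ℝ) - 1 ≠ 0 := by linarith
    push_cast [Nat.cast_sub hs.le]
    field_simp
  rw [← Real.rpow_natCast, ← Real.rpow_mul hP, hexp, le_div_iff₀ hcard_pos] at amgm
  linarith

end Finset

theorem Matrix.IsHermitian.trace_mul_self_eq_sum_sq_eigenvalues {𝕜 n : Type*} [RCLike 𝕜]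
    [Fintype n] [DecidableEq n] {A : Matrix n n 𝕜} (hA : A.IsHermitian) :
    (A * A).trace = ∑ i, (hA.eigenvalues i : 𝕜) ^ 2 := by
  conv_lhs => rw [hA.spectral_theorem, ← map_mul, Unitary.conjStarAlgAut_apply,
    Matrix.trace_mul_cycle, Unitary.coe_star_mul_self, one_mul, Matrix.diagonal_mul_diagonal,
    Matrix.trace_diagonal]
  simp [sq]

theorem SimpleGraph.trace_adjMatrix_mul_self {V α : Type*} [Fintype V]
    (G : SimpleGraph V) [DecidableRel G.Adj] [NonAssocSemiring α] :
    (G.adjMatrix α * G.adjMatrix α).trace = 2 * #G.edgeFinset := by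
  simp only [Matrix.trace, Matrix.diag_apply, G.adjMatrix_mul_self_apply_self]
  rw [← Nat.cast_sum, G.sum_degrees_eq_twice_card_edges, Nat.cast_mul, Nat.cast_ofNat]

theorem graph_energy_lower_bound_mcclelland_general {n : ℕ} (G : SimpleGraph (Fin n))
    [DecidableRel G.Adj] (m : ℕ) (hm : m = G.edgeFinset.card)
    (κ : ℕ) (hκ : κ = G.nullity) :
    G.energy ≥
      Real.sqrt (2 * m +
        ((n : ℝ) - κ) * ((n : ℝ) - κ - 1) *
          |G.prodNonzeroEig| ^ ((2 : ℝ) / ((n : ℝ) - κ))) := by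
  set lam := G.adjMatrix_isHermitian.eigenvalues
  set S := univ.filter fun i => lam i ≠ 0
  have hrank : (n : ℝ) - κ = #S := by
    have := card_filter_add_card_filter_not (s := univ) (p := fun i => lam i = 0)
    rw [card_univ, Fintype.card_fin] at this
    rw [hκ, SimpleGraph.nullity, eq_comm, eq_sub_iff_add_eq']
    exact_mod_cast this
  have henergy : G.energy = ∑ i ∈ S, |lam i| :=
    (sum_filter_of_ne fun i _ h => abs_ne_zero.1 h).symm
  have hsq : ∑ i ∈ S, |lam i| ^ 2 = 2 * m := by
    rw [sum_filter_of_ne fun i _ h => abs_ne_zero.1 (pow_ne_zero_iff two_ne_zero |>.1 h), hm,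
      ← G.trace_adjMatrix_mul_self, G.adjMatrix_isHermitian.trace_mul_self_eq_sum_sq_eigenvalues]
    simp [lam]
  rw [ge_iff_le, hrank, ← hsq, SimpleGraph.prodNonzeroEig, abs_prod,
    Real.sqrt_le_left (henergy ▸ sum_nonneg fun i _ => abs_nonneg _), henergy,
    sq_sum_eq_sum_sq_add_sum_offDiag]
  gcongr
  exact card_mul_card_sub_one_mul_prod_rpow_le_sum_offDiag S fun i _ => abs_nonneg _

theorem graph_energy_lower_bound_mcclelland {n : ℕ} (G : SimpleGraph (Fin n))
    [DecidableRel G.Adj] (m : ℕ) (hm : m = G.edgeFinset.card)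
    (hiso : ∀ v, 0 < G.degree v)
    (κ : ℕ) (hκ : κ = G.nullity) :
    G.energy ≥
      Real.sqrt (2 * m +
        ((n : ℝ) - κ) * ((n : ℝ) - κ - 1) *
          |G.prodNonzeroEig| ^ ((2 : ℝ) / ((n : ℝ) - κ))) :=
  graph_energy_lower_bound_mcclelland_general G m hm κ hκ
end

section
/- Let R be a nonzero n×n real symmetric matrix with nonnegative entries, with spectral radius ρ (its largest eigenvalue) and nullity κ = η(R). Then E(R) ≥ ρ + (n − κ − 1) + ln|Υ_{n−κ}(R)| − ln ρ. -/
open Finset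

/-- The energy of a Hermitian (real symmetric) matrix: the sum of the absolute
values of its eigenvalues. -/
noncomputable def Matrix.energy {n : ℕ} (R : Matrix (Fin n) (Fin n) ℝ)
    (hR : R.IsHermitian) : ℝ :=
  ∑ i, |hR.eigenvalues i|

/-- The nullity of a Hermitian (real symmetric) matrix: the multiplicity of `0`
as an eigenvalue. -/
noncomputable def Matrix.nullityEig {n : ℕ} (R : Matrix (Fin n) (Fin n) ℝ)
    (hR : R.IsHermitian) : ℕ :=
  (Finset.univ.filter fun i => hR.eigenvalues i = 0).card

/-- `Υ_{n-κ}(R)`: the product of the nonzero eigenvalues of `R`, i.e. the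
`(n-κ)`-th elementary symmetric function of the eigenvalues when `κ` is the
nullity. -/
noncomputable def Matrix.prodNonzeroEig {n : ℕ} (R : Matrix (Fin n) (Fin n) ℝ)
    (hR : R.IsHermitian) : ℝ :=
  ∏ i ∈ Finset.univ.filter (fun i => hR.eigenvalues i ≠ 0), hR.eigenvalues i

/-
Every nonzero eigenvalue other than `ρ` satisfies `|λ| ≥ 1 + ln |λ|`; summing over the `n - κ - 1`
of them turns the sum of their logarithms into `ln |Υ_{n-κ}| - ln ρ`. The spectral radius is
positive because the trace of a nonnegative matrix is nonnegative and not every eigenvalue vanishes.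
-/

namespace Finset

theorem card_add_log_abs_prod_le_sum_abs {ι : Type*} (s : Finset ι) {f : ι → ℝ}
    (hf : ∀ i ∈ s, f i ≠ 0) :
    #s + Real.log |∏ i ∈ s, f i| ≤ ∑ i ∈ s, |f i| := by
  rw [abs_prod, Real.log_prod fun i hi => abs_ne_zero.mpr (hf i hi), card_eq_sum_ones,
    Nat.cast_sum, Nat.cast_one, ← sum_add_distrib]
  refine sum_le_sum fun i hi => ?_
  linarith [Real.log_le_sub_one_of_pos (abs_pos.mpr (hf i hi))]

theorem abs_add_card_sub_one_add_log_le_sum_abs {ι : Type*} [Fintype ι] [DecidableEq ι]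
    {x : ι → ℝ} {i : ι} (hi : x i ≠ 0) :
    |x i| + ((#{j | x j ≠ 0} : ℝ) - 1) + Real.log |∏ j with x j ≠ 0, x j| - Real.log |x i| ≤
      ∑ j, |x j| := by
  set S : Finset ι := {j | x j ≠ 0}
  have hiS : i ∈ S := mem_filter.mpr ⟨mem_univ i, hi⟩
  have hsum : ∑ j ∈ S, |x j| = ∑ j, |x j| :=
    sum_filter_of_ne fun j _ hj => abs_ne_zero.mp hj
  have hrest := (S.erase i).card_add_log_abs_prod_le_sum_abs
    fun j hj => (mem_filter.mp (mem_of_mem_erase hj)).2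
  rw [← hsum, ← add_sum_erase S _ hiS, ← mul_prod_erase S _ hiS, abs_mul,
    Real.log_mul (abs_ne_zero.mpr hi) (abs_ne_zero.mpr (prod_ne_zero_iff.mpr fun j hj =>
      (mem_filter.mp (mem_of_mem_erase hj)).2)),
    ← Nat.cast_pred (card_pos.mpr ⟨i, hiS⟩), ← card_erase_of_mem hiS]
  linarith

end Finset

theorem pos_of_isGreatest_range_of_sum_nonneg {ι : Type*} [Fintype ι] {x : ι → ℝ} {ρ : ℝ}
    (hρ : IsGreatest (Set.range x) ρ) (hsum : 0 ≤ ∑ i, x i) (hx : x ≠ 0) : 0 < ρ := by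
  by_contra! hρ_nonpos
  have hle : ∀ i ∈ Finset.univ, x i ≤ 0 := fun i _ => (hρ.2 ⟨i, rfl⟩).trans hρ_nonpos
  have hzero := (Finset.sum_eq_zero_iff_of_nonpos hle).mp
    (le_antisymm (Finset.sum_nonpos hle) hsum)
  exact hx (funext fun i => hzero i (Finset.mem_univ i))

namespace Matrix

theorem nullityEig_add_card_eigenvalues_ne_zero {n : ℕ} (R : Matrix (Fin n) (Fin n) ℝ)
    (hR : R.IsHermitian) : R.nullityEig hR + #{i | hR.eigenvalues i ≠ 0} = n := by
  rw [nullityEig, card_filter_add_card_filter_not, card_univ, Fintype.card_fin]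

theorem IsHermitian.sum_eigenvalues_nonneg {n : ℕ} {R : Matrix (Fin n) (Fin n) ℝ}
    (hR : R.IsHermitian) (hdiag : ∀ i, 0 ≤ R i i) : 0 ≤ ∑ i, hR.eigenvalues i := by
  have htrace : R.trace = ∑ i, hR.eigenvalues i := by simpa using hR.trace_eq_sum_eigenvalues
  exact htrace ▸ sum_nonneg fun i _ => hdiag i

end Matrix

theorem energy_lower_bound_das_mojallal_gutman {n : ℕ}
    (R : Matrix (Fin n) (Fin n) ℝ) (hR : R.IsHermitian)
    (hnonneg : ∀ i j, 0 ≤ R i j) (hR0 : R ≠ 0)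
    (ρ : ℝ) (hρ : IsGreatest (Set.range hR.eigenvalues) ρ)
    (κ : ℕ) (hκ : κ = R.nullityEig hR) :
    R.energy hR ≥
      ρ + ((n : ℝ) - κ - 1) + Real.log |R.prodNonzeroEig hR| - Real.log ρ := by
  have hρ_pos : 0 < ρ := pos_of_isGreatest_range_of_sum_nonneg hρ
    (hR.sum_eigenvalues_nonneg fun i => hnonneg i i) (mt hR.eigenvalues_eq_zero_iff.mp hR0)
  obtain ⟨i, hi⟩ := hρ.1
  have hbound := abs_add_card_sub_one_add_log_le_sum_abs (x := hR.eigenvalues) (i := i)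
    (hi ▸ hρ_pos.ne')
  rw [hi, abs_of_pos hρ_pos] at hbound
  have hcard : (κ : ℝ) + #{i | hR.eigenvalues i ≠ 0} = n :=
    mod_cast hκ ▸ R.nullityEig_add_card_eigenvalues_ne_zero hR
  rw [Matrix.energy, Matrix.prodNonzeroEig]
  linarith
end

section
/- Let R be a nonzero n×n real symmetric matrix with nonnegative entries, with spectral radius ρ (its largest eigenvalue) and nullity κ = η(R). Suppose there exist three distinct indices i, j, k such that R has zero diagonal entries at i, j, k and, setting a = R[i,j], b = R[j,k], c = R[i,k], there exist real numbers α, β, γ, not all zero, with 2(aαβ + bβγ + cαγ)/(α² + β² + γ²) < −1. Then the inequality is strict: E(R) > ρ + (n − κ − 1) + ln|Υ_{n−κ}(R)| − ln ρ. -/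
open Finset

/-! If every eigenvalue of `R` were at least `-1`, then `R + 1` would be positive semidefinite,
contradicting the hypothesis on the Rayleigh quotient; so `R` has an eigenvalue `λ < -1`. Since
the trace of `R` is nonnegative, `ρ > 0`. Splitting `ρ` off both `E(R)` and `ln |Υ_{n-κ}(R)|`,
the claim reduces to `n - κ - 1 + ∑ ln |μ| < ∑ |μ|` over the remaining nonzero eigenvalues
`μ`, which follows termwise from `1 + ln x ≤ x`, strictly at `x = |λ| > 1`. -/

open Matrix Unitary
open scoped ComplexOrder

theorem Matrix.IsHermitian.posSemidef_sub_smul_one {𝕜 n : Type*} [RCLike 𝕜] [Fintype n]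
    [DecidableEq n] {A : Matrix n n 𝕜} (hA : A.IsHermitian) {c : ℝ}
    (hc : ∀ i, c ≤ hA.eigenvalues i) : (A - (c : 𝕜) • 1).PosSemidef := by
  have hconj : A - (c : 𝕜) • 1 = conjStarAlgAut 𝕜 _ hA.eigenvectorUnitary
      (diagonal (RCLike.ofReal ∘ (hA.eigenvalues - fun _ => c))) := by
    have hdiag : diagonal (RCLike.ofReal ∘ (hA.eigenvalues - fun _ => c)) =
        diagonal (RCLike.ofReal ∘ hA.eigenvalues) - (c : 𝕜) • (1 : Matrix n n 𝕜) := by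
      rw [smul_one_eq_diagonal, diagonal_sub]
      congr 1
      ext
      simp
    rw [hdiag, map_sub, map_smul, map_one, ← hA.spectral_theorem]
  rw [hconj]
  simp [isUnit_coe.posSemidef_star_right_conjugate_iff, posSemidef_diagonal_iff, hc]

section Real

variable {n : Type*} [Fintype n] [DecidableEq n] {A : Matrix n n ℝ}

theorem Matrix.IsHermitian.exists_eigenvalues_lt_of_dotProduct_mulVec_lt (hA : A.IsHermitian)
    {c : ℝ} {v : n → ℝ} (hv : v ⬝ᵥ (A *ᵥ v) < c * (v ⬝ᵥ v)) :
    ∃ i, hA.eigenvalues i < c := by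
  by_contra! hc
  have := (hA.posSemidef_sub_smul_one hc).dotProduct_mulVec_nonneg v
  simp only [star_trivial, sub_mulVec, dotProduct_sub, smul_mulVec, one_mulVec,
    dotProduct_smul, RCLike.ofReal_real_eq_id, id, smul_eq_mul, sub_nonneg] at this
  linarith

theorem Matrix.IsHermitian.exists_eigenvalues_lt_of_quadratic_form_lt (hA : A.IsHermitian)
    {i j k : n} (hij : i ≠ j) (hjk : j ≠ k) (hik : i ≠ k) {α β γ c : ℝ}
    (h : α ^ 2 * A i i + β ^ 2 * A j j + γ ^ 2 * A k k +
        2 * (A i j * α * β + A j k * β * γ + A i k * α * γ) <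
      c * (α ^ 2 + β ^ 2 + γ ^ 2)) :
    ∃ l, hA.eigenvalues l < c := by
  have hsymm : ∀ p q, A q p = A p q := fun p q => by simpa using hA.apply p q
  refine hA.exists_eigenvalues_lt_of_dotProduct_mulVec_lt
    (v := Pi.single i α + Pi.single j β + Pi.single k γ) ?_
  convert h using 1
  · simp [mulVec_add, dotProduct_add, add_dotProduct, mulVec_single, hsymm j i, hsymm k j,
      hsymm k i]
    ring
  · congr 1
    simp [hij, hjk, hik, hij.symm, hjk.symm, hik.symm]
    ring

theorem Matrix.IsHermitian.exists_eigenvalues_pos_of_trace_nonneg (hA : A.IsHermitian)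
    (htr : 0 ≤ A.trace) {m : n} (hm : hA.eigenvalues m < 0) : ∃ p, 0 < hA.eigenvalues p := by
  by_contra! hle
  have htr_eq : A.trace = ∑ p, hA.eigenvalues p := by simpa using hA.trace_eq_sum_eigenvalues
  have hsum_neg : ∑ p, hA.eigenvalues p < 0 := sum_neg' (fun p _ => hle p) ⟨m, mem_univ m, hm⟩
  linarith

end Real

theorem Finset.card_add_sum_log_abs_lt_sum_abs {ι : Type*} {s : Finset ι} {f : ι → ℝ}
    (hf : ∀ l ∈ s, f l ≠ 0) {m : ι} (hm : m ∈ s) (hm1 : |f m| ≠ 1) :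
    #s + ∑ l ∈ s, Real.log |f l| < ∑ l ∈ s, |f l| := by
  have hlt : ∑ l ∈ s, (1 + Real.log |f l|) < ∑ l ∈ s, |f l| := by
    refine sum_lt_sum (fun l hl => ?_) ⟨m, hm, ?_⟩
    · linarith [Real.log_le_sub_one_of_pos (abs_pos.mpr (hf l hl))]
    · linarith [Real.log_lt_sub_one_of_pos (abs_pos.mpr (hf m hm)) hm1]
  rwa [sum_add_distrib, sum_const, nsmul_one] at hlt

namespace Matrix

variable {n : ℕ} (R : Matrix (Fin n) (Fin n) ℝ) (hR : R.IsHermitian)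

theorem energy_eq_sum_abs_nonzero :
    R.energy hR = ∑ l with hR.eigenvalues l ≠ 0, |hR.eigenvalues l| :=
  (sum_filter_of_ne fun _ _ h => abs_ne_zero.mp h).symm

theorem log_abs_prodNonzeroEig :
    Real.log |R.prodNonzeroEig hR| =
      ∑ l with hR.eigenvalues l ≠ 0, Real.log |hR.eigenvalues l| := by
  rw [prodNonzeroEig, abs_prod, Real.log_prod]
  intro l hl
  exact abs_ne_zero.mpr (mem_filter.mp hl).2

theorem nullityEig_add_card_nonzero : R.nullityEig hR + #{l | hR.eigenvalues l ≠ 0} = n := by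
  rw [nullityEig, card_filter_add_card_filter_not, card_univ, Fintype.card_fin]

end Matrix

theorem energy_strict_lower_bound_of_rayleigh_submatrix_general {n : ℕ}
    (R : Matrix (Fin n) (Fin n) ℝ) (hR : R.IsHermitian)
    (hnonneg : ∀ i j, 0 ≤ R i j)
    (ρ : ℝ) (hρ : IsGreatest (Set.range hR.eigenvalues) ρ)
    (κ : ℕ) (hκ : κ = R.nullityEig hR)
    (i j k : Fin n) (hij : i ≠ j) (hjk : j ≠ k) (hik : i ≠ k)
    (hii : R i i = 0) (hjj : R j j = 0) (hkk : R k k = 0)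
    (hray : ∃ α β γ : ℝ, (α, β, γ) ≠ (0, 0, 0) ∧
      2 * (R i j * α * β + R j k * β * γ + R i k * α * γ) /
        (α ^ 2 + β ^ 2 + γ ^ 2) < -1) :
    R.energy hR >
      ρ + ((n : ℝ) - κ - 1) + Real.log |R.prodNonzeroEig hR| - Real.log ρ := by
  obtain ⟨α, β, γ, -, hq⟩ := hray
  have hden : 0 < α ^ 2 + β ^ 2 + γ ^ 2 := by
    by_contra! h
    rw [le_antisymm h (by positivity), div_zero] at hq
    norm_num at hq
  obtain ⟨m, hm⟩ := hR.exists_eigenvalues_lt_of_quadratic_form_lt (c := -1) hij hjk hik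
    (α := α) (β := β) (γ := γ) (by
      rw [div_lt_iff₀ hden] at hq
      simp only [hii, hjj, hkk, mul_zero, zero_add]
      exact hq)
  obtain ⟨p, hp⟩ := hR.exists_eigenvalues_pos_of_trace_nonneg
    (sum_nonneg fun l _ => hnonneg l l) (hm.trans (by norm_num))
  obtain ⟨i₀, hi₀⟩ := hρ.1
  have hρ_pos : 0 < ρ := hp.trans_le (hρ.2 ⟨p, rfl⟩)
  set S : Finset (Fin n) := {l | hR.eigenvalues l ≠ 0}
  have hi₀S : i₀ ∈ S := by simp [S, hi₀, hρ_pos.ne']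
  have hmS : m ∈ S.erase i₀ := by
    simp only [S, mem_erase, mem_filter, mem_univ, true_and]
    exact ⟨by rintro rfl; linarith, (hm.trans (by norm_num)).ne⟩
  have key := card_add_sum_log_abs_lt_sum_abs
    (fun l hl => (mem_filter.mp (mem_of_mem_erase hl)).2) hmS
    (by rw [abs_of_neg (by linarith)]; exact ne_of_gt (by linarith))
  have hcard : (#(S.erase i₀) : ℝ) = n - κ - 1 := by
    have hsum : (κ : ℝ) + #S = n := by exact_mod_cast hκ ▸ R.nullityEig_add_card_nonzero hR
    rw [card_erase_of_mem hi₀S, Nat.cast_sub (card_pos.mpr ⟨i₀, hi₀S⟩)]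
    push_cast
    linarith
  rw [R.energy_eq_sum_abs_nonzero hR, R.log_abs_prodNonzeroEig hR, ← add_sum_erase S _ hi₀S,
    ← add_sum_erase S _ hi₀S, hi₀, abs_of_pos hρ_pos, ← hcard]
  linarith

theorem energy_strict_lower_bound_of_rayleigh_submatrix {n : ℕ}
    (R : Matrix (Fin n) (Fin n) ℝ) (hR : R.IsHermitian)
    (hnonneg : ∀ i j, 0 ≤ R i j) (hR0 : R ≠ 0)
    (ρ : ℝ) (hρ : IsGreatest (Set.range hR.eigenvalues) ρ)
    (κ : ℕ) (hκ : κ = R.nullityEig hR)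
    (i j k : Fin n) (hij : i ≠ j) (hjk : j ≠ k) (hik : i ≠ k)
    (hii : R i i = 0) (hjj : R j j = 0) (hkk : R k k = 0)
    (hray : ∃ α β γ : ℝ, (α, β, γ) ≠ (0, 0, 0) ∧
      2 * (R i j * α * β + R j k * β * γ + R i k * α * γ) /
        (α ^ 2 + β ^ 2 + γ ^ 2) < -1) :
    R.energy hR >
      ρ + ((n : ℝ) - κ - 1) + Real.log |R.prodNonzeroEig hR| - Real.log ρ :=
  energy_strict_lower_bound_of_rayleigh_submatrix_general R hR hnonneg ρ hρ κ hκ i j k hij hjk hik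
    hii hjj hkk hray
end

section
/- Let R be an n×n real symmetric matrix with nonnegative entries, with largest eigenvalue ρ and nullity κ = η(R), and suppose there exists a nonzero vector x with nonnegative entries such that μ := (xᵀRx)/(xᵀx) ≥ 1. Then E(R) = μ + (n − κ − 1) + ln|Υ_{n−κ}(R)| − ln μ holds if and only if x is an eigenvector of R associated with ρ and, after removing one occurrence of ρ from the list of eigenvalues, every remaining nonzero eigenvalue of R has absolute value 1. -/
open Finset

/-!
Since every eigenvalue is at most `ρ`, the matrix `ρ • 1 - R` is positive semidefinite, so the
Rayleigh quotient satisfies `μ ≤ ρ`, with equality exactly when `R x = ρ x`. Splitting one copy of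
`ρ` off the nonzero eigenvalues `λ` gives
`E(R) - (n - κ - 1) - ln |Υ_{n-κ}(R)| = (ρ - ln ρ) + ∑ (|λ| - 1 - ln |λ|)`.
As `t - ln t` is increasing on `[1, ∞)` and `t - 1 - ln t ≥ 0` with equality only at `t = 1`,
`E(R)` exceeds the bound by a sum of nonnegative terms, which vanish exactly when `μ = ρ` and
every other nonzero eigenvalue has modulus `1`.
-/

open scoped Matrix ComplexOrder

namespace Real

theorem strictMonoOn_sub_log : StrictMonoOn (fun t => t - log t) (Set.Ici 1) := by
  intro a (ha : 1 ≤ a) b _ hab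
  have ha₀ : 0 < a := by linarith
  have hlog : log b - log a < b / a - 1 := by
    rw [← log_div (by linarith) ha₀.ne']
    exact log_lt_sub_one_of_pos (div_pos (by linarith) ha₀) ((one_lt_div ha₀).2 hab).ne'
  have hdiv : b / a - 1 ≤ b - a := by
    rw [div_sub_one ha₀.ne', div_le_iff₀ ha₀]
    nlinarith
  dsimp only
  linarith

theorem sub_one_sub_log_nonneg {t : ℝ} (ht : 0 < t) : 0 ≤ t - 1 - log t := by
  linarith [log_le_sub_one_of_pos ht]

theorem sub_one_sub_log_eq_zero_iff {t : ℝ} (ht : 0 < t) : t - 1 - log t = 0 ↔ t = 1 := by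
  refine ⟨fun h => by_contra fun hne => ?_, by rintro rfl; simp⟩
  linarith [log_lt_sub_one_of_pos ht hne]

end Real

section SumAbs

variable {ι : Type*} [Fintype ι] [DecidableEq ι] (l : ι → ℝ)

theorem sum_abs_sub_log_abs_prod_eq {i₀ : ι} (hi₀ : 0 < l i₀) :
    ∑ i, |l i| - ((#{i | l i ≠ 0} : ℝ) - 1) - Real.log |∏ i ∈ {i | l i ≠ 0}, l i| =
      l i₀ - Real.log (l i₀) +
        ∑ i ∈ ({i | l i ≠ 0} : Finset ι).erase i₀, (|l i| - 1 - Real.log |l i|) := by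
  set S : Finset ι := {i | l i ≠ 0}
  have hi₀S : i₀ ∈ S := mem_filter.2 ⟨mem_univ _, hi₀.ne'⟩
  have hsum : ∑ i, |l i| = ∑ i ∈ S, |l i| :=
    (sum_filter_of_ne fun i _ h => abs_ne_zero.1 h).symm
  have hlog : Real.log |∏ i ∈ S, l i| = ∑ i ∈ S, Real.log |l i| := by
    rw [abs_prod, Real.log_prod fun i hi => abs_ne_zero.2 (mem_filter.1 hi).2]
  rw [hsum, hlog, ← add_sum_erase S _ hi₀S, ← add_sum_erase S _ hi₀S, ← card_erase_add_one hi₀S,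
    abs_of_pos hi₀, sum_sub_distrib, sum_sub_distrib, sum_const, nsmul_one]
  push_cast
  ring

variable {l}

theorem sum_abs_eq_add_log_abs_prod_sub_log_iff {i₀ : ι} {μ : ℝ} (hμ : 1 ≤ μ) (hμi₀ : μ ≤ l i₀) :
    ∑ i, |l i| = μ + ((#{i | l i ≠ 0} : ℝ) - 1) + Real.log |∏ i ∈ {i | l i ≠ 0}, l i| -
        Real.log μ ↔
      μ = l i₀ ∧ ∀ i, i ≠ i₀ → l i ≠ 0 → |l i| = 1 := by
  have key := sum_abs_sub_log_abs_prod_eq l (i₀ := i₀) (by linarith)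
  set G := ∑ i ∈ ({i | l i ≠ 0} : Finset ι).erase i₀, (|l i| - 1 - Real.log |l i|)
  have hD : 0 ≤ (l i₀ - Real.log (l i₀)) - (μ - Real.log μ) :=
    sub_nonneg.2 (Real.strictMonoOn_sub_log.monotoneOn hμ (hμ.trans hμi₀) hμi₀)
  have hG : 0 ≤ G := sum_nonneg fun i hi =>
    Real.sub_one_sub_log_nonneg (abs_pos.2 (mem_filter.1 (mem_of_mem_erase hi)).2)
  have hiff : ∑ i, |l i| = μ + ((#{i | l i ≠ 0} : ℝ) - 1) +
        Real.log |∏ i ∈ {i | l i ≠ 0}, l i| - Real.log μ ↔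
      (l i₀ - Real.log (l i₀)) - (μ - Real.log μ) + G = 0 := by
    constructor <;> intro h <;> linarith
  rw [hiff, add_eq_zero_iff_of_nonneg hD hG, sub_eq_zero,
    Real.strictMonoOn_sub_log.injOn.eq_iff (hμ.trans hμi₀) hμ, eq_comm,
    sum_eq_zero_iff_of_nonneg fun i hi => Real.sub_one_sub_log_nonneg
      (abs_pos.2 (mem_filter.1 (mem_of_mem_erase hi)).2)]
  simp only [mem_erase, mem_filter, mem_univ, true_and, and_imp]
  refine and_congr_right fun _ => forall₂_congr fun i _ => forall_congr' fun hi =>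
    Real.sub_one_sub_log_eq_zero_iff (abs_pos.2 hi)

end SumAbs

namespace Matrix

variable {n 𝕜 : Type*} [Fintype n] [DecidableEq n] [RCLike 𝕜]

theorem IsHermitian.posSemidef_smul_one_sub {A : Matrix n n 𝕜} (hA : A.IsHermitian) {ρ : ℝ}
    (hρ : ∀ i, hA.eigenvalues i ≤ ρ) : (ρ • 1 - A).PosSemidef := by
  rw [posSemidef_iff_isHermitian_and_spectrum_nonneg]
  refine ⟨(isHermitian_one.smul (IsSelfAdjoint.all ρ)).sub hA, ?_⟩
  rw [← algebraMap_smul 𝕜 ρ (1 : Matrix n n 𝕜), Algebra.smul_def, mul_one,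
    ← spectrum.singleton_sub_eq, hA.spectrum_eq_image_range]
  rintro _ ⟨_, rfl, _, ⟨_, ⟨i, rfl⟩, rfl⟩, rfl⟩
  simp only [Set.mem_ofPred_eq, RCLike.algebraMap_eq_ofReal, ← RCLike.ofReal_sub,
    RCLike.ofReal_nonneg]
  exact sub_nonneg.2 (hρ i)

theorem IsHermitian.dotProduct_mulVec_le {A : Matrix n n ℝ} (hA : A.IsHermitian) {ρ : ℝ}
    (hρ : ∀ i, hA.eigenvalues i ≤ ρ) (x : n → ℝ) : x ⬝ᵥ A *ᵥ x ≤ ρ * (x ⬝ᵥ x) := by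
  have := (hA.posSemidef_smul_one_sub hρ).dotProduct_mulVec_nonneg x
  rw [star_trivial, sub_mulVec, smul_mulVec, one_mulVec, dotProduct_sub, dotProduct_smul,
    smul_eq_mul] at this
  linarith

theorem IsHermitian.dotProduct_mulVec_eq_iff {A : Matrix n n ℝ} (hA : A.IsHermitian) {ρ : ℝ}
    (hρ : ∀ i, hA.eigenvalues i ≤ ρ) (x : n → ℝ) :
    x ⬝ᵥ A *ᵥ x = ρ * (x ⬝ᵥ x) ↔ A *ᵥ x = ρ • x := by
  have := (hA.posSemidef_smul_one_sub hρ).dotProduct_mulVec_zero_iff x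
  rw [star_trivial, sub_mulVec, smul_mulVec, one_mulVec, dotProduct_sub, dotProduct_smul,
    sub_eq_zero, sub_eq_zero] at this
  simpa [eq_comm] using this

end Matrix

theorem Matrix.card_sub_nullityEig {n : ℕ} {R : Matrix (Fin n) (Fin n) ℝ} (hR : R.IsHermitian) :
    (n : ℝ) - R.nullityEig hR = #{i | hR.eigenvalues i ≠ 0} := by
  rw [nullityEig, sub_eq_iff_eq_add', ← Nat.cast_add, card_filter_add_card_filter_not, card_univ,
    Fintype.card_fin]

open scoped Matrix in
theorem energy_eq_rayleigh_bound_iff_general {n : ℕ}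
    (R : Matrix (Fin n) (Fin n) ℝ) (hR : R.IsHermitian)
    (ρ : ℝ) (hρ : IsGreatest (Set.range hR.eigenvalues) ρ)
    (κ : ℕ) (hκ : κ = R.nullityEig hR)
    (x : Fin n → ℝ) (hx0 : x ≠ 0)
    (μ : ℝ) (hμdef : μ = (x ⬝ᵥ (R *ᵥ x)) / (x ⬝ᵥ x)) (hμ : 1 ≤ μ) :
    R.energy hR =
      μ + ((n : ℝ) - κ - 1) + Real.log |R.prodNonzeroEig hR| - Real.log μ ↔
    (R *ᵥ x = ρ • x ∧
      ∃ i₀, hR.eigenvalues i₀ = ρ ∧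
        ∀ i, i ≠ i₀ → hR.eigenvalues i ≠ 0 → |hR.eigenvalues i| = 1) := by
  have hle : ∀ i, hR.eigenvalues i ≤ ρ := fun i => hρ.2 ⟨i, rfl⟩
  have hxx : 0 < x ⬝ᵥ x := by simpa using Matrix.dotProduct_star_self_pos_iff.2 hx0
  have hμρ : μ ≤ ρ := hμdef ▸ (div_le_iff₀ hxx).2 (hR.dotProduct_mulVec_le hle x)
  have hμeq : μ = ρ ↔ R *ᵥ x = ρ • x := by
    rw [hμdef, div_eq_iff hxx.ne', hR.dotProduct_mulVec_eq_iff hle]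
  have key : ∀ i₀, hR.eigenvalues i₀ = ρ → (R.energy hR =
      μ + ((n : ℝ) - κ - 1) + Real.log |R.prodNonzeroEig hR| - Real.log μ ↔
      R *ᵥ x = ρ • x ∧ ∀ i, i ≠ i₀ → hR.eigenvalues i ≠ 0 → |hR.eigenvalues i| = 1) := by
    rintro i₀ rfl
    rw [Matrix.energy, hκ, Matrix.card_sub_nullityEig hR, Matrix.prodNonzeroEig,
      sum_abs_eq_add_log_abs_prod_sub_log_iff hμ hμρ, hμeq]
  constructor
  · intro h
    obtain ⟨i₀, hi₀⟩ := hρ.1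
    exact ⟨((key i₀ hi₀).1 h).1, i₀, hi₀, ((key i₀ hi₀).1 h).2⟩
  · rintro ⟨hx, i₀, hi₀, hone⟩
    exact (key i₀ hi₀).2 ⟨hx, hone⟩

open scoped Matrix in
theorem energy_eq_rayleigh_bound_iff {n : ℕ}
    (R : Matrix (Fin n) (Fin n) ℝ) (hR : R.IsHermitian)
    (hnonneg : ∀ i j, 0 ≤ R i j)
    (ρ : ℝ) (hρ : IsGreatest (Set.range hR.eigenvalues) ρ)
    (κ : ℕ) (hκ : κ = R.nullityEig hR)
    (x : Fin n → ℝ) (hx0 : x ≠ 0) (hxnn : ∀ i, 0 ≤ x i)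
    (μ : ℝ) (hμdef : μ = (x ⬝ᵥ (R *ᵥ x)) / (x ⬝ᵥ x)) (hμ : 1 ≤ μ) :
    R.energy hR =
      μ + ((n : ℝ) - κ - 1) + Real.log |R.prodNonzeroEig hR| - Real.log μ ↔
    (R *ᵥ x = ρ • x ∧
      ∃ i₀, hR.eigenvalues i₀ = ρ ∧
        ∀ i, i ≠ i₀ → hR.eigenvalues i ≠ 0 → |hR.eigenvalues i| = 1) :=
  energy_eq_rayleigh_bound_iff_general R hR ρ hρ κ hκ x hx0 μ hμdef hμ
end

section
/- Let G be a finite simple graph with n vertices and nullity κ = η(G), and let G₁ be the subgraph induced on a connected component of G having n₁ ≥ 2 vertices and m₁ edges. Then E(G) ≥ 2m₁/n₁ + (n − κ − 1) + ln|Υ_{n−κ}(G)| − ln(2m₁/n₁). -/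
/-
Testing the adjacency matrix against the indicator vector of the component shows that the
largest eigenvalue `λ` is at least the average degree `d = 2m₁/n₁` of the component, and `d ≥ 1`
since a connected graph on `n₁ ≥ 2` vertices has at least `n₁ - 1` edges. Every other nonzero
eigenvalue `μ` satisfies `|μ| ≥ 1 + ln |μ|`, so summing gives
`E(G) ≥ λ + (n - κ - 1) + ln |Υ| - ln λ`; finally `t ↦ t - ln t` is increasing on `[1, ∞)`.
-/

open Finset

/-- Adjacency in an induced subgraph is decidable. -/
instance instDecidableRelInduceAdj {n : ℕ} (G : SimpleGraph (Fin n))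
    [h : DecidableRel G.Adj] (s : Set (Fin n)) :
    DecidableRel (SimpleGraph.induce s G).Adj :=
  fun a b => h a b

open Matrix

open scoped MatrixOrder in
theorem Matrix.IsHermitian.dotProduct_mulVec_le_s14 {ι : Type*} [Fintype ι] [DecidableEq ι]
    {A : Matrix ι ι ℝ} (hA : A.IsHermitian) {c : ℝ} (hc : ∀ i, hA.eigenvalues i ≤ c)
    (x : ι → ℝ) : x ⬝ᵥ (A *ᵥ x) ≤ c * (x ⬝ᵥ x) := by
  have hle : A ≤ algebraMap ℝ _ c := by
    rw [le_algebraMap_iff_spectrum_le hA.isSelfAdjoint, hA.spectrum_real_eq_range_eigenvalues]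
    rintro _ ⟨i, rfl⟩
    exact hc i
  have hpsd := (Matrix.le_iff.mp hle).dotProduct_mulVec_nonneg x
  simp only [star_trivial, Algebra.algebraMap_eq_smul_one, sub_mulVec, smul_mulVec, one_mulVec,
    dotProduct_sub, dotProduct_smul, smul_eq_mul, sub_nonneg] at hpsd
  exact hpsd

theorem Finset.card_add_log_abs_prod_le_sum_abs_s14 {ι : Type*} (s : Finset ι) {f : ι → ℝ}
    (hf : ∀ i ∈ s, f i ≠ 0) : #s + Real.log |∏ i ∈ s, f i| ≤ ∑ i ∈ s, |f i| := by
  rw [abs_prod, Real.log_prod fun i hi => abs_ne_zero.mpr (hf i hi), ← nsmul_one,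
    ← sum_const, ← sum_add_distrib]
  refine sum_le_sum fun i hi => ?_
  linarith [Real.log_le_sub_one_of_pos (abs_pos.mpr (hf i hi))]

theorem Real.sub_log_le_sub_log {a b : ℝ} (ha : 1 ≤ a) (hab : a ≤ b) :
    a - Real.log a ≤ b - Real.log b := by
  have ha0 : 0 < a := by linarith
  have hlog := Real.log_le_sub_one_of_pos (div_pos (ha0.trans_le hab) ha0)
  rw [Real.log_div (ha0.trans_le hab).ne' ha0.ne'] at hlog
  have hdiv : b / a - 1 ≤ b - a := by
    rw [div_sub_one ha0.ne', div_le_iff₀ ha0]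
    nlinarith
  linarith

namespace SimpleGraph

theorem Connected.card_le_two_mul_card_edgeSet {V : Type*} {G : SimpleGraph V}
    (hG : G.Connected) (hV : 2 ≤ Nat.card V) : Nat.card V ≤ 2 * Nat.card G.edgeSet := by
  have := hG.card_vert_le_card_edgeSet_add_one
  omega

theorem indicator_dotProduct_adjMatrix_mulVec_indicator {V α : Type*} [Fintype V]
    [NonAssocSemiring α] (G : SimpleGraph V) [DecidableRel G.Adj] (s : Finset V) :
    (s : Set V).indicator 1 ⬝ᵥ (G.adjMatrix α *ᵥ (s : Set V).indicator 1)
      = 2 * #(G.induce (s : Set V)).edgeFinset := by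
  classical
  rw [← Nat.cast_ofNat, ← Nat.cast_mul, ← dart_card_eq_twice_card_edges,
    natCast_card_dart_eq_dotProduct, dotProduct_one, ← one_dotProduct,
    dotProduct_mulVec_adjMatrix, dotProduct_mulVec_adjMatrix]
  have hrow : ∀ x, (∑ y, if G.Adj x y then (s : Set V).indicator (1 : V → α) x *
      (s : Set V).indicator 1 y else 0)
      = if x ∈ s then ∑ y ∈ s, if G.Adj x y then 1 else 0 else 0 := by
    intro x
    by_cases hx : x ∈ s
    · rw [if_pos hx, ← Fintype.sum_ite_mem s]
      refine Fintype.sum_congr _ _ fun y => ?_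
      by_cases hy : y ∈ s <;> simp [hx, hy]
    · simp [hx]
  simp_rw [hrow, Fintype.sum_ite_mem, ← sum_coe_sort s]
  simp

theorem exists_average_degree_induce_le_eigenvalue {V : Type*} [Fintype V] [DecidableEq V]
    (G : SimpleGraph V) [DecidableRel G.Adj] {s : Finset V} (hs : s.Nonempty) :
    ∃ i, 2 * (#(G.induce (s : Set V)).edgeFinset : ℝ) / #s
      ≤ G.adjMatrix_isHermitian.eigenvalues i := by
  have : Nonempty V := ⟨hs.choose⟩
  obtain ⟨i, hi⟩ := Finite.exists_max G.adjMatrix_isHermitian.eigenvalues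
  refine ⟨i, ?_⟩
  have hx := G.adjMatrix_isHermitian.dotProduct_mulVec_le_s14 hi ((s : Set V).indicator 1)
  have hxx : (s : Set V).indicator (1 : V → ℝ) ⬝ᵥ (s : Set V).indicator 1 = #s := by
    simp [dotProduct, Set.indicator_apply]
  rw [indicator_dotProduct_adjMatrix_mulVec_indicator, hxx] at hx
  rw [div_le_iff₀ (by exact_mod_cast hs.card_pos)]
  exact hx

theorem le_energy_of_eigenvalue_pos {n : ℕ} (G : SimpleGraph (Fin n)) [DecidableRel G.Adj]
    {i₀ : Fin n} (hi₀ : 0 < G.adjMatrix_isHermitian.eigenvalues i₀) :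
    G.adjMatrix_isHermitian.eigenvalues i₀ + ((n : ℝ) - G.nullity - 1)
        + Real.log |G.prodNonzeroEig| - Real.log (G.adjMatrix_isHermitian.eigenvalues i₀)
      ≤ G.energy := by
  set μ := G.adjMatrix_isHermitian.eigenvalues
  set T := univ.filter fun i => μ i ≠ 0
  have hi₀T : i₀ ∈ T := by simp [T, hi₀.ne']
  have hT : ∀ i ∈ T.erase i₀, μ i ≠ 0 := fun i hi => (mem_filter.mp (mem_of_mem_erase hi)).2
  have hcard : (#(T.erase i₀) : ℝ) = n - G.nullity - 1 := by
    have hsplit : G.nullity + #T = n := by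
      simpa [nullity, T] using card_filter_add_card_filter_not (s := univ) fun i => μ i = 0
    have hsplit' : (G.nullity : ℝ) + #T = n := by exact_mod_cast hsplit
    have herase : (#(T.erase i₀) : ℝ) + 1 = #T := by exact_mod_cast card_erase_add_one hi₀T
    linarith
  have hprod : |G.prodNonzeroEig| = μ i₀ * |∏ i ∈ T.erase i₀, μ i| := by
    rw [prodNonzeroEig, ← mul_prod_erase T μ hi₀T, abs_mul, abs_of_pos hi₀]
  have hsum : μ i₀ + ∑ i ∈ T.erase i₀, |μ i| ≤ G.energy := by
    rw [energy, ← abs_of_pos hi₀, add_sum_erase T (fun i => |μ i|) hi₀T]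
    exact sum_le_sum_of_subset_of_nonneg (subset_univ T) fun i _ _ => abs_nonneg (μ i)
  have hlog := (T.erase i₀).card_add_log_abs_prod_le_sum_abs_s14 hT
  rw [hprod, Real.log_mul hi₀.ne' (abs_ne_zero.mpr (prod_ne_zero_iff.mpr hT))]
  linarith

end SimpleGraph

theorem graph_energy_lower_bound_component_average_degree {n : ℕ}
    (G : SimpleGraph (Fin n)) [DecidableRel G.Adj]
    (κ : ℕ) (hκ : κ = G.nullity)
    (s : Finset (Fin n))
    (hcomp : ∃ c : G.ConnectedComponent, (↑s : Set (Fin n)) = c.supp)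
    (n₁ m₁ : ℕ) (hn₁ : n₁ = s.card) (hn₁2 : 2 ≤ n₁)
    (hm₁ : m₁ = (SimpleGraph.induce (↑s : Set (Fin n)) G).edgeFinset.card) :
    G.energy ≥
      2 * (m₁ : ℝ) / (n₁ : ℝ) + ((n : ℝ) - κ - 1) +
        Real.log |G.prodNonzeroEig| - Real.log (2 * (m₁ : ℝ) / (n₁ : ℝ)) := by
  obtain ⟨c, hc⟩ := hcomp
  subst hκ hn₁ hm₁
  have hconn : (G.induce (s : Set (Fin n))).Connected := by
    rw [hc]
    exact c.connected_toSimpleGraph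
  have hdeg : (1 : ℝ) ≤ 2 * #(G.induce (s : Set (Fin n))).edgeFinset / #s := by
    have hcard := hconn.card_le_two_mul_card_edgeSet (by simpa using hn₁2)
    rw [Nat.card_coe_set_eq, Set.ncard_coe_finset, Nat.card_eq_fintype_card,
      ← SimpleGraph.edgeFinset_card] at hcard
    rw [le_div_iff₀ (by positivity), one_mul]
    exact_mod_cast hcard
  obtain ⟨i, hi⟩ := G.exists_average_degree_induce_le_eigenvalue (s := s) (card_pos.mp (by omega))
  have henergy := G.le_energy_of_eigenvalue_pos ((zero_lt_one.trans_le hdeg).trans_le hi)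
  have hmono := Real.sub_log_le_sub_log hdeg hi
  linarith
end

section
/- Let G be a connected finite simple graph with n ≥ 2 vertices whose adjacency matrix A = A(G) is nonsingular (det A ≠ 0). For each integer k ≥ 0 define γ^(k) = sqrt( ‖A^{k+1} e‖² / ‖A^{k} e‖² ), where e is the all-ones vector and ‖·‖ is the Euclidean norm. Then for every k ≥ 0, E(G) ≥ γ^(k) + (n − 1) + ln|det A| − ln γ^(k). -/
/-!
With `f x = x - 1 - log x ≥ 0`, nonsingularity gives `log |det A| = ∑ log |λᵢ|`, hence
`E(G) = n + log |det A| + ∑ f |λᵢ| ≥ n + log |det A| + f ρ` for `ρ = maxᵢ |λᵢ|`.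
A zero row would kill `det A`, so every vertex has a neighbour; then walk counts are `≥ 1`
and `‖A x‖ ≥ ‖x‖` for `x ≥ 0`, while `‖A x‖ ≤ ρ ‖x‖` in an orthonormal eigenbasis.
Thus `1 ≤ γ⁽ᵏ⁾ ≤ ρ`, and `f` is increasing on `[1, ∞)`.
-/

open Finset

open Matrix

theorem Real.monotoneOn_sub_one_sub_log :
    MonotoneOn (fun x => x - 1 - Real.log x) (Set.Ici 1) := by
  intro a (ha : 1 ≤ a) b _ hab
  have ha0 : 0 < a := one_pos.trans_le ha
  have hb0 : 0 < b := ha0.trans_le hab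
  have hlog : Real.log b - Real.log a ≤ b - a :=
    calc Real.log b - Real.log a = Real.log (b / a) := (Real.log_div hb0.ne' ha0.ne').symm
      _ ≤ b / a - 1 := Real.log_le_sub_one_of_pos (div_pos hb0 ha0)
      _ = (b - a) / a := by field_simp
      _ ≤ b - a := div_le_self (by linarith) ha
  dsimp only
  linarith

theorem OrthonormalBasis.sum_sq_dotProduct {ι κ : Type*} [Fintype ι] [Fintype κ]
    (b : OrthonormalBasis κ ℝ (EuclideanSpace ℝ ι)) (w : ι → ℝ) :
    ∑ i, (⇑(b i) ⬝ᵥ w) ^ 2 = ∑ v, w v ^ 2 := by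
  have := b.sum_sq_inner_right (WithLp.toLp 2 w)
  rw [EuclideanSpace.real_norm_sq_eq] at this
  simpa [EuclideanSpace.inner_eq_star_dotProduct, dotProduct_comm] using this

namespace Matrix.IsHermitian

theorem eigenvalues_ne_zero_of_det_ne_zero {𝕜 ι : Type*} [RCLike 𝕜] [Fintype ι] [DecidableEq ι]
    {A : Matrix ι ι 𝕜} (hA : A.IsHermitian) (hdet : A.det ≠ 0) (i : ι) :
    hA.eigenvalues i ≠ 0 := by
  rw [hA.det_eq_prod_eigenvalues] at hdet
  exact_mod_cast prod_ne_zero_iff.1 hdet i (mem_univ i)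

variable {ι : Type*} [Fintype ι] [DecidableEq ι] {A : Matrix ι ι ℝ}

theorem eigenvectorBasis_dotProduct_mulVec (hA : A.IsHermitian) (i : ι) (w : ι → ℝ) :
    ⇑(hA.eigenvectorBasis i) ⬝ᵥ (A *ᵥ w) =
      hA.eigenvalues i * (⇑(hA.eigenvectorBasis i) ⬝ᵥ w) := by
  have hAt : Aᵀ = A := by simpa [conjTranspose_eq_transpose_of_trivial] using hA.eq
  rw [dotProduct_mulVec, ← mulVec_transpose, hAt, mulVec_eigenvectorBasis, smul_dotProduct,
    smul_eq_mul]

theorem sum_sq_mulVec_le (hA : A.IsHermitian) {M : ℝ} (hM : ∀ i, |hA.eigenvalues i| ≤ M)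
    (w : ι → ℝ) : ∑ v, (A *ᵥ w) v ^ 2 ≤ M ^ 2 * ∑ v, w v ^ 2 := by
  rw [← hA.eigenvectorBasis.sum_sq_dotProduct (A *ᵥ w), ← hA.eigenvectorBasis.sum_sq_dotProduct w,
    mul_sum]
  gcongr with i
  rw [eigenvectorBasis_dotProduct_mulVec, mul_pow]
  exact mul_le_mul_of_nonneg_right (sq_le_sq' (abs_le.1 (hM i)).1 (abs_le.1 (hM i)).2)
    (sq_nonneg _)

end Matrix.IsHermitian

namespace SimpleGraph

variable {V : Type*} [Fintype V] {G : SimpleGraph V} [DecidableRel G.Adj]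

theorem sum_sq_le_sum_sq_adjMatrix_mulVec (hadj : ∀ v, ∃ w, G.Adj v w) {x : V → ℝ}
    (hx : 0 ≤ x) : ∑ v, x v ^ 2 ≤ ∑ v, (G.adjMatrix ℝ *ᵥ x) v ^ 2 :=
  calc ∑ v, x v ^ 2
      ≤ ∑ v, (G.degree v : ℝ) * x v ^ 2 := by
        gcongr with v
        refine le_mul_of_one_le_left (sq_nonneg _) ?_
        exact_mod_cast (G.degree_pos_iff_exists_adj v).2 (hadj v)
    _ = ∑ v, ∑ u ∈ G.neighborFinset v, x u ^ 2 := by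
        simp only [← card_neighborFinset_eq_degree, ← nsmul_eq_mul, ← sum_const]
        exact sum_comm' fun v u => by simp [adj_comm]
    _ ≤ ∑ v, (∑ u ∈ G.neighborFinset v, x u) ^ 2 := by
        gcongr with v
        exact sum_sq_le_sq_sum_of_nonneg fun u _ => hx u
    _ = ∑ v, (G.adjMatrix ℝ *ᵥ x) v ^ 2 := by simp only [adjMatrix_mulVec_apply]

variable [DecidableEq V]

theorem exists_adj_of_det_adjMatrix_ne_zero {R : Type*} [CommRing R]
    (hdet : (G.adjMatrix R).det ≠ 0) (v : V) : ∃ w, G.Adj v w := by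
  by_contra! h
  exact hdet (det_eq_zero_of_row_eq_zero v fun w => by simp [h w])

theorem one_le_adjMatrix_pow_mulVec_one (hadj : ∀ v, ∃ w, G.Adj v w) (k : ℕ) (v : V) :
    1 ≤ ((G.adjMatrix ℝ ^ k) *ᵥ fun _ => 1) v := by
  induction k generalizing v with
  | zero => simp
  | succ k ih =>
    obtain ⟨w, hvw⟩ := hadj v
    rw [pow_succ', ← mulVec_mulVec, adjMatrix_mulVec_apply]
    exact (ih w).trans <| single_le_sum (fun u _ => zero_le_one.trans (ih u))
      ((mem_neighborFinset G v w).2 hvw)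

variable (G) in
/-- `‖Aᵏ 𝟙‖²`: the `v`-th entry of `Aᵏ 𝟙` counts the walks of length `k` starting at `v`. -/
noncomputable def walkCountSqSum (k : ℕ) : ℝ :=
  ∑ v, ((G.adjMatrix ℝ ^ k) *ᵥ fun _ => 1) v ^ 2

theorem walkCountSqSum_pos [Nonempty V] (hadj : ∀ v, ∃ w, G.Adj v w) (k : ℕ) :
    0 < G.walkCountSqSum k :=
  sum_pos (fun v _ => pow_pos (one_pos.trans_le (one_le_adjMatrix_pow_mulVec_one hadj k v)) 2)
    univ_nonempty

theorem walkCountSqSum_le_succ (hadj : ∀ v, ∃ w, G.Adj v w) (k : ℕ) :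
    G.walkCountSqSum k ≤ G.walkCountSqSum (k + 1) := by
  rw [walkCountSqSum, walkCountSqSum, pow_succ', ← mulVec_mulVec]
  exact sum_sq_le_sum_sq_adjMatrix_mulVec hadj
    fun v => zero_le_one.trans (one_le_adjMatrix_pow_mulVec_one hadj k v)

theorem walkCountSqSum_succ_le {M : ℝ} (hM : ∀ i, |G.adjMatrix_isHermitian.eigenvalues i| ≤ M)
    (k : ℕ) : G.walkCountSqSum (k + 1) ≤ M ^ 2 * G.walkCountSqSum k := by
  rw [walkCountSqSum, walkCountSqSum, pow_succ', ← mulVec_mulVec]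
  exact G.adjMatrix_isHermitian.sum_sq_mulVec_le hM _

end SimpleGraph

namespace SimpleGraph

variable {n : ℕ} {G : SimpleGraph (Fin n)} [DecidableRel G.Adj]

theorem energy_eq_add_sum_sub_one_sub_log (hdet : (G.adjMatrix ℝ).det ≠ 0) :
    G.energy = n + Real.log |(G.adjMatrix ℝ).det| +
      ∑ i, (|G.adjMatrix_isHermitian.eigenvalues i| - 1 -
        Real.log |G.adjMatrix_isHermitian.eigenvalues i|) := by
  have hA := G.adjMatrix_isHermitian
  rw [hA.det_eq_prod_eigenvalues]
  simp only [RCLike.ofReal_real_eq_id, id_eq, abs_prod]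
  rw [Real.log_prod fun i _ => abs_ne_zero.2 (hA.eigenvalues_ne_zero_of_det_ne_zero hdet i),
    sum_sub_distrib, sum_sub_distrib, energy]
  simp

theorem add_sub_one_sub_log_le_energy (hdet : (G.adjMatrix ℝ).det ≠ 0) {t : ℝ} (ht : 1 ≤ t)
    {i : Fin n} (hti : t ≤ |G.adjMatrix_isHermitian.eigenvalues i|) :
    n + Real.log |(G.adjMatrix ℝ).det| + (t - 1 - Real.log t) ≤ G.energy := by
  set μ := G.adjMatrix_isHermitian.eigenvalues
  rw [energy_eq_add_sum_sub_one_sub_log hdet]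
  refine (add_le_add_iff_left _).2 ?_
  calc t - 1 - Real.log t ≤ |μ i| - 1 - Real.log |μ i| :=
        Real.monotoneOn_sub_one_sub_log ht (ht.trans hti) hti
    _ ≤ ∑ j, (|μ j| - 1 - Real.log |μ j|) :=
        single_le_sum (f := fun j => |μ j| - 1 - Real.log |μ j|)
          (fun j _ => sub_nonneg.2 (Real.log_le_sub_one_of_pos (abs_pos.2
            (G.adjMatrix_isHermitian.eigenvalues_ne_zero_of_det_ne_zero hdet j))))
          (mem_univ i)

end SimpleGraph

open scoped Matrix in
theorem graph_energy_lower_bound_walk_sequence_nonsingular_general {n : ℕ}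
    (G : SimpleGraph (Fin n)) [DecidableRel G.Adj]
    (hdet : (G.adjMatrix ℝ).det ≠ 0)
    (γ : ℕ → ℝ)
    (hγ : ∀ k, γ k =
      Real.sqrt ((∑ v, (((G.adjMatrix ℝ) ^ (k + 1)) *ᵥ (fun _ => (1 : ℝ))) v ^ 2) /
        (∑ v, (((G.adjMatrix ℝ) ^ k) *ᵥ (fun _ => (1 : ℝ))) v ^ 2))) :
    ∀ k : ℕ,
      G.energy ≥
        γ k + ((n : ℝ) - 1) +
          Real.log |(G.adjMatrix ℝ).det| - Real.log (γ k) := by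
  intro k
  rcases Nat.eq_zero_or_pos n with rfl | hn
  · -- no vertices: `det = 1` and `γ k = √(0 / 0) = 0`
    simp [SimpleGraph.energy, hγ]
  have : Nonempty (Fin n) := ⟨⟨0, hn⟩⟩
  have hadj := SimpleGraph.exists_adj_of_det_adjMatrix_ne_zero hdet
  obtain ⟨i, -, hi⟩ :=
    exists_max_image univ (fun i => |G.adjMatrix_isHermitian.eigenvalues i|) univ_nonempty
  have hpos := G.walkCountSqSum_pos hadj k
  have hγk : γ k = Real.sqrt (G.walkCountSqSum (k + 1) / G.walkCountSqSum k) := hγ k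
  have hγ_ge : 1 ≤ γ k := by
    rw [hγk, Real.one_le_sqrt, one_le_div hpos]
    exact G.walkCountSqSum_le_succ hadj k
  have hγ_le : γ k ≤ |G.adjMatrix_isHermitian.eigenvalues i| := by
    rw [hγk, Real.sqrt_le_left (abs_nonneg _), div_le_iff₀ hpos]
    exact G.walkCountSqSum_succ_le (fun j => hi j (mem_univ j)) k
  have := G.add_sub_one_sub_log_le_energy hdet hγ_ge hγ_le
  linarith

open scoped Matrix in
theorem graph_energy_lower_bound_walk_sequence_nonsingular {n : ℕ}
    (G : SimpleGraph (Fin n)) [DecidableRel G.Adj]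
    (hconn : G.Connected) (hn : 2 ≤ n)
    (hdet : (G.adjMatrix ℝ).det ≠ 0)
    (γ : ℕ → ℝ)
    (hγ : ∀ k, γ k =
      Real.sqrt ((∑ v, (((G.adjMatrix ℝ) ^ (k + 1)) *ᵥ (fun _ => (1 : ℝ))) v ^ 2) /
        (∑ v, (((G.adjMatrix ℝ) ^ k) *ᵥ (fun _ => (1 : ℝ))) v ^ 2))) :
    ∀ k : ℕ,
      G.energy ≥
        γ k + ((n : ℝ) - 1) +
          Real.log |(G.adjMatrix ℝ).det| - Real.log (γ k) :=
  graph_energy_lower_bound_walk_sequence_nonsingular_general G hdet γ hγ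
end
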